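/- Let 1 ≤ p < ∞, let n ≥ 2 be an integer, let f be analytic on the unit disk 𝔻 with primitive F(z) = ∫₀ᶻ f(w) dw, and let F̃_n(z) = Σ_{i=0}^{n} ((−1)^i / i!) (z* − z)^i F^{(i)}(z*) for |z| > 1, where z* = 1/conj(z). Then there exist constants c₁, c₂ > 0 depending only on n and p such that c₁ · ∫_𝔻 (1 − |w|)^{np−2} |f^{(n)}(w)|^p dA(w) ≤ ∫_{|z|>1} |∂̄F̃_n(z)|^p / (|z|^{np/2 − p + 2} − 1)² dA(z) ≤ c₂ · ∫_𝔻 (1 − |w|)^{np−2} |f^{(n)}(w)|^p dA(w). -/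

import Mathlib

/-!
`F̃_n(z)` is the degree-`n` Taylor polynomial of `F` at `z*`, evaluated at `z`. Differentiating
in `z̄`, the terms telescope and only the top one survives:
`∂̄F̃_n(z) = -((-1)^n / n!) (z*)² (z* - z)^n F^{(n+1)}(z*)`.
Substituting `z = w*` (Jacobian `|w|⁻⁴`) and using `|w - w*| = (1 - |w|²)/|w|`, all powers of `|w|`
cancel for the exponent `α = np/2 - p + 2`, and the exterior integral becomes exactly
`(n!)^{-p} ∫_𝔻 (1 - |w|²)^{np} / (1 - |w|^α)² |f^{(n)}(w)|^p dA(w)`.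
Finally `1 - t ≤ 1 - t^α ≤ α (1 - t)` and `1 ≤ (1 + t)^{np} ≤ 2^{np}` make this radial weight
comparable to `(1 - t)^{np - 2}`.
-/

open MeasureTheory Metric Complex Set
open scoped ENNReal Real

noncomputable section

/-- The Cauchy–Riemann (Wirtinger) operator `∂̄g = (1/2)(∂g/∂x + i ∂g/∂y)`. -/
def dbar (g : ℂ → ℂ) (z : ℂ) : ℂ :=
  (1 / 2 : ℂ) * (fderiv ℝ g z 1 + Complex.I * fderiv ℝ g z Complex.I)

/-- `z* = 1/conj(z)`. -/
def zstar (z : ℂ) : ℂ := ((starRingEnd ℂ) z)⁻¹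

open scoped ComplexConjugate Nat

section Inversion

theorem zstar_zstar (z : ℂ) : zstar (zstar z) = z := by
  simp [zstar]

theorem norm_zstar (z : ℂ) : ‖zstar z‖ = ‖z‖⁻¹ := by
  simp [zstar]

theorem norm_sub_zstar (w : ℂ) : ‖w - zstar w‖ = |1 - ‖w‖ ^ 2| / ‖w‖ := by
  rcases eq_or_ne w 0 with rfl | hw
  · simp [zstar]
  have hcw : conj w ≠ 0 := (map_ne_zero _).2 hw
  have : w - zstar w = ((‖w‖ ^ 2 - 1 : ℝ) : ℂ) / conj w := by
    rw [zstar, eq_div_iff hcw, sub_mul, inv_mul_cancel₀ hcw, mul_conj, normSq_eq_norm_sq]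
    push_cast
    ring
  rw [this, norm_div, norm_real, Real.norm_eq_abs, Complex.norm_conj, abs_sub_comm]

def mulConj (b : ℂ) : ℂ →L[ℝ] ℂ :=
  (ContinuousLinearMap.mul ℝ ℂ b).comp conjCLE.toContinuousLinearMap

theorem mulConj_apply (b v : ℂ) : mulConj b v = b * conj v := rfl

theorem det_mulConj (b : ℂ) : LinearMap.det (mulConj b : ℂ →ₗ[ℝ] ℂ) = -normSq b := by
  have : (mulConj b : ℂ →ₗ[ℝ] ℂ) = (Algebra.lmul ℝ ℂ b).comp conjAe.toLinearMap := rfl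
  rw [this, LinearMap.det_comp, ← Algebra.norm_apply, Algebra.norm_complex_apply, det_conjAe]
  ring

theorem hasFDerivAt_zstar {z : ℂ} (hz : z ≠ 0) : HasFDerivAt zstar (mulConj (-zstar z ^ 2)) z := by
  have hinv :=
    (hasDerivAt_inv ((map_ne_zero (starRingEnd ℂ)).2 hz)).hasFDerivAt.restrictScalars ℝ
  refine (hinv.comp z conjCLE.toContinuousLinearMap.hasFDerivAt).congr_fderiv ?_
  ext v
  simp [zstar, mulConj_apply, mul_comm, inv_pow]

theorem differentiableAt_zstar {z : ℂ} (hz : z ≠ 0) : DifferentiableAt ℝ zstar z :=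
  (hasFDerivAt_zstar hz).differentiableAt

theorem abs_det_fderiv_zstar (w : ℂ) :
    |LinearMap.det (mulConj (-zstar w ^ 2) : ℂ →ₗ[ℝ] ℂ)| = (‖w‖ ^ 4)⁻¹ := by
  rw [det_mulConj, abs_neg, abs_of_nonneg (normSq_nonneg _), normSq_eq_norm_sq, norm_neg,
    norm_pow, norm_zstar]
  ring

theorem zstar_image_ball_diff_zero : zstar '' (ball (0 : ℂ) 1 \ {0}) = {z | 1 < ‖z‖} := by
  ext z
  simp only [mem_image, mem_sdiff, mem_ball_zero_iff, mem_singleton_iff, mem_ofPred_eq]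
  constructor
  · rintro ⟨w, ⟨hw1, hw0⟩, rfl⟩
    rw [norm_zstar]
    exact one_lt_inv₀ (norm_pos_iff.2 hw0) |>.2 hw1
  · intro hz
    have hz0 : z ≠ 0 := norm_pos_iff.1 (one_pos.trans hz)
    refine ⟨zstar z, ⟨?_, ?_⟩, zstar_zstar z⟩
    · rw [norm_zstar]
      exact inv_lt_one_of_one_lt₀ hz
    · simpa [zstar] using hz0

theorem lintegral_norm_gt_one_eq (g : ℂ → ℝ≥0∞) :
    ∫⁻ z in {z : ℂ | 1 < ‖z‖}, g z =
      ∫⁻ w in ball (0 : ℂ) 1 \ {0}, ENNReal.ofReal (‖w‖ ^ 4)⁻¹ * g (zstar w) := by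
  rw [← zstar_image_ball_diff_zero,
    lintegral_image_eq_lintegral_abs_det_fderiv_mul volume (measurableSet_ball.diff
      (measurableSet_singleton 0)) (fun w hw ↦ (hasFDerivAt_zstar hw.2).hasFDerivWithinAt)
      (Function.LeftInverse.injective zstar_zstar).injOn]
  simp_rw [abs_det_fderiv_zstar]

end Inversion

section Wirtinger

variable {g h : ℂ → ℂ} {z : ℂ}

theorem dbar_sub (hg : DifferentiableAt ℝ g z) (hh : DifferentiableAt ℝ h z) :
    dbar (fun x ↦ g x - h x) z = dbar g z - dbar h z := by
  simp only [dbar, fderiv_fun_sub hg hh, sub_apply]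
  ring

theorem dbar_mul (hg : DifferentiableAt ℝ g z) (hh : DifferentiableAt ℝ h z) :
    dbar (fun x ↦ g x * h x) z = dbar g z * h z + g z * dbar h z := by
  simp only [dbar, fderiv_fun_mul hg hh, add_apply, smul_apply, smul_eq_mul]
  ring

theorem dbar_sum {ι : Type*} (s : Finset ι) {G : ι → ℂ → ℂ}
    (hG : ∀ i ∈ s, DifferentiableAt ℝ (G i) z) :
    dbar (fun x ↦ ∑ i ∈ s, G i x) z = ∑ i ∈ s, dbar (G i) z := by
  simp only [dbar, fderiv_fun_sum hG, sum_apply, Finset.mul_sum, ← Finset.sum_add_distrib]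

theorem dbar_comp {G : ℂ → ℂ} (hG : DifferentiableAt ℂ G (g z)) (hg : DifferentiableAt ℝ g z) :
    dbar (fun x ↦ G (g x)) z = deriv G (g z) * dbar g z := by
  have hG' := hG.hasDerivAt.hasFDerivAt.restrictScalars ℝ
  rw [dbar, dbar, HasFDerivAt.fderiv (f := fun x ↦ G (g x)) (hG'.comp z hg.hasFDerivAt)]
  simp only [ContinuousLinearMap.comp_apply, ContinuousLinearMap.coe_restrictScalars',
    ContinuousLinearMap.toSpanSingleton_apply, smul_eq_mul]
  ring

theorem dbar_id : dbar (fun x ↦ x) z = 0 := by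
  simp [dbar]

theorem dbar_zstar (hz : z ≠ 0) : dbar zstar z = -zstar z ^ 2 := by
  rw [dbar, (hasFDerivAt_zstar hz).fderiv, mulConj_apply, mulConj_apply, map_one, conj_I]
  linear_combination (1 / 2 * zstar z ^ 2) * I_sq

end Wirtinger

theorem sum_range_taylor_telescope {K : Type*} [Field K] [CharZero K] (q : K) (g : ℕ → K)
    (n : ℕ) :
    ∑ i ∈ Finset.range (n + 1), (-1) ^ i / (i ! : K) * (i * q ^ (i - 1) * g i + q ^ i * g (i + 1)) =
      (-1) ^ n / (n ! : K) * q ^ n * g (n + 1) := by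
  induction n with
  | zero => simp
  | succ m ih =>
    rw [Finset.sum_range_succ, ih, Nat.add_sub_cancel, Nat.factorial_succ, Nat.cast_mul]
    have hm : (m ! : K) ≠ 0 := Nat.cast_ne_zero.2 m.factorial_ne_zero
    have hm1 : (m : K) + 1 ≠ 0 := Nat.cast_add_one_ne_zero m
    push_cast
    field_simp
    ring

/-- `F̃_n`; since `(-1)^i (z* - z)^i = (z - z*)^i`, it is the degree-`n` Taylor polynomial of `F`
at `z*`, evaluated at `z`. -/
def reflectedTaylor (n : ℕ) (F : ℂ → ℂ) (z : ℂ) : ℂ :=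
  ∑ i ∈ Finset.range (n + 1),
    ((-1 : ℂ) ^ i / (Nat.factorial i : ℂ)) * (zstar z - z) ^ i * iteratedDeriv i F (zstar z)

theorem dbar_reflectedTaylor {n : ℕ} {F : ℂ → ℂ} {z : ℂ} (hz : z ≠ 0)
    (hF : ∀ i ≤ n, DifferentiableAt ℂ (iteratedDeriv i F) (zstar z)) :
    dbar (reflectedTaylor n F) z =
      -((-1) ^ n / (n ! : ℂ) * zstar z ^ 2 * (zstar z - z) ^ n *
        iteratedDeriv (n + 1) F (zstar z)) := by
  set w := zstar z
  set c : ℕ → ℂ := fun i ↦ (-1) ^ i / (i ! : ℂ)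
  have hzs := differentiableAt_zstar hz
  have hq : DifferentiableAt ℝ (fun x ↦ zstar x - x) z := hzs.sub differentiableAt_fun_id
  have hdq : dbar (fun x ↦ zstar x - x) z = -w ^ 2 := by
    rw [dbar_sub (h := fun x ↦ x) hzs differentiableAt_fun_id, dbar_zstar hz, dbar_id, sub_zero]
  have hpoly (i : ℕ) : DifferentiableAt ℂ (fun u ↦ c i * u ^ i) (w - z) := by fun_prop
  have hcq (i : ℕ) : DifferentiableAt ℝ (fun x ↦ c i * (zstar x - x) ^ i) z := by fun_prop
  have hG (i : ℕ) (hi : i ≤ n) : DifferentiableAt ℝ (fun x ↦ iteratedDeriv i F (zstar x)) z :=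
    ((hF i hi).restrictScalars ℝ).fun_comp' z hzs
  have hterm (i : ℕ) (hi : i ≤ n) :
      dbar (fun x ↦ c i * (zstar x - x) ^ i * iteratedDeriv i F (zstar x)) z =
        -w ^ 2 * (c i * (i * (w - z) ^ (i - 1) * iteratedDeriv i F w +
          (w - z) ^ i * iteratedDeriv (i + 1) F w)) := by
    rw [dbar_mul (hcq i) (hG i hi), dbar_comp (g := fun x ↦ zstar x - x) (hpoly i) hq,
      dbar_comp (hF i hi) hzs, hdq, dbar_zstar hz, iteratedDeriv_succ]
    simp only [deriv_const_mul_field', deriv_pow_field]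
    ring
  unfold reflectedTaylor
  rw [dbar_sum _ fun i hi ↦ ?_]
  · rw [Finset.sum_congr rfl fun i hi ↦ hterm i (Nat.lt_succ_iff.1 (Finset.mem_range.1 hi)),
      ← Finset.mul_sum, sum_range_taylor_telescope]
    ring
  · exact (hcq i).mul (hG i (Nat.lt_succ_iff.1 (Finset.mem_range.1 hi)))

theorem norm_dbar_reflectedTaylor_zstar {n : ℕ} {F : ℂ → ℂ} {w : ℂ} (hw : w ≠ 0)
    (hF : ∀ i ≤ n, DifferentiableAt ℂ (iteratedDeriv i F) w) :
    ‖dbar (reflectedTaylor n F) (zstar w)‖ =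
      (n ! : ℝ)⁻¹ * ‖iteratedDeriv (n + 1) F w‖ * ‖w‖ ^ 2 * (|1 - ‖w‖ ^ 2| / ‖w‖) ^ n := by
  have hzw : zstar w ≠ 0 := by simpa [zstar] using hw
  rw [dbar_reflectedTaylor hzw (by simpa only [zstar_zstar] using hF), zstar_zstar]
  simp only [norm_neg, norm_mul, norm_div, norm_pow, norm_one, one_pow, Complex.norm_natCast,
    norm_sub_zstar]
  ring

theorem one_sub_rpow_le_mul_one_sub {t α : ℝ} (ht : 0 ≤ t) (hα : 1 ≤ α) :
    1 - t ^ α ≤ α * (1 - t) := by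
  have := one_add_mul_self_le_rpow_one_add (s := t - 1) (by linarith) hα
  rw [add_sub_cancel] at this
  linarith

theorem inversion_weight_bounds {t α N : ℝ} (ht0 : 0 ≤ t) (ht1 : t < 1) (hα : 1 ≤ α)
    (hN : 0 ≤ N) :
    (α⁻¹) ^ 2 * (1 - t) ^ (N - 2) ≤ (1 - t ^ 2) ^ N / (1 - t ^ α) ^ 2 ∧
      (1 - t ^ 2) ^ N / (1 - t ^ α) ^ 2 ≤ 2 ^ N * (1 - t) ^ (N - 2) := by
  have h1t : 0 < 1 - t := by linarith
  have hle : 1 - t ≤ 1 - t ^ α := by linarith [Real.rpow_le_self_of_le_one ht0 ht1.le hα]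
  have hge : 1 - t ^ α ≤ α * (1 - t) := one_sub_rpow_le_mul_one_sub ht0 hα
  have hratio_le : (1 - t) / (1 - t ^ α) ≤ 1 := div_le_one_of_le₀ hle (h1t.le.trans hle)
  have hratio_ge : α⁻¹ ≤ (1 - t) / (1 - t ^ α) := by
    rw [inv_eq_one_div, div_le_div_iff₀ (by linarith) (h1t.trans_le hle)]
    linarith
  have hfactor : (1 - t ^ 2) ^ N / (1 - t ^ α) ^ 2 =
      (1 + t) ^ N * ((1 - t) / (1 - t ^ α)) ^ 2 * (1 - t) ^ (N - 2) := by
    rw [show 1 - t ^ 2 = (1 - t) * (1 + t) by ring, Real.mul_rpow h1t.le (by linarith),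
      Real.rpow_sub h1t, Real.rpow_two]
    field_simp
  have hone : 1 ≤ (1 + t) ^ N := Real.one_le_rpow (by linarith) hN
  have htwo : (1 + t) ^ N ≤ 2 ^ N := Real.rpow_le_rpow (by linarith) (by linarith) hN
  rw [hfactor]
  constructor
  · calc (α⁻¹) ^ 2 * (1 - t) ^ (N - 2) = 1 * (α⁻¹) ^ 2 * (1 - t) ^ (N - 2) := by ring
      _ ≤ _ := by gcongr
  · calc _ ≤ 2 ^ N * 1 ^ 2 * (1 - t) ^ (N - 2) := by
          gcongr
          exact div_nonneg h1t.le (h1t.le.trans hle)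
      _ = _ := by ring

theorem inversion_weight_eq {t a p : ℝ} (n : ℕ) (ht0 : 0 < t) (ht1 : t < 1) (ha : 0 ≤ a) :
    (t ^ 4)⁻¹ * ((a * t ^ 2 * ((1 - t ^ 2) / t) ^ n) ^ p / ((t⁻¹) ^ (n * p / 2 - p + 2) - 1) ^ 2) =
      a ^ p * ((1 - t ^ 2) ^ (n * p) / (1 - t ^ (n * p / 2 - p + 2)) ^ 2) := by
  set α : ℝ := n * p / 2 - p + 2
  have hu : 0 ≤ 1 - t ^ 2 := by nlinarith
  have hbase : a * t ^ 2 * ((1 - t ^ 2) / t) ^ n = a * (1 - t ^ 2) ^ n * t ^ (2 - n : ℝ) := by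
    rw [Real.rpow_sub ht0, Real.rpow_two, Real.rpow_natCast, div_pow]
    field_simp
  have hinv : (t⁻¹) ^ α - 1 = (1 - t ^ α) * (t ^ α)⁻¹ := by
    rw [Real.inv_rpow ht0.le]
    field_simp
  have hexp : (t ^ 4)⁻¹ * (t ^ (2 - n : ℝ)) ^ p * ((t ^ α)⁻¹)⁻¹ ^ 2 = 1 := by
    rw [inv_inv, ← Real.rpow_mul ht0.le, ← Real.rpow_natCast (t ^ α) 2, ← Real.rpow_mul ht0.le,
      ← Real.rpow_natCast t 4, ← Real.rpow_neg ht0.le, ← Real.rpow_add ht0, ← Real.rpow_add ht0]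
    simp only [α]
    push_cast
    ring_nf
    exact Real.rpow_zero t
  rw [hbase, Real.mul_rpow (by positivity) (by positivity), Real.mul_rpow ha (by positivity),
    ← Real.rpow_natCast_mul hu, hinv, mul_pow, div_mul_eq_div_div, div_eq_mul_inv _ (_ ^ 2)]
  linear_combination (a ^ p * (1 - t ^ 2) ^ (n * p) / (1 - t ^ α) ^ 2) * hexp

theorem lintegral_dbar_reflectedTaylor_eq (n : ℕ) {F : ℂ → ℂ} (p : ℝ)
    (hF : DifferentiableOn ℂ F (ball 0 1)) :
    ∫⁻ z in {z : ℂ | 1 < ‖z‖}, ENNReal.ofReal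
        (‖dbar (reflectedTaylor n F) z‖ ^ p / (‖z‖ ^ ((n : ℝ) * p / 2 - p + 2) - 1) ^ 2) =
      ∫⁻ w in ball (0 : ℂ) 1, ENNReal.ofReal ((n ! : ℝ)⁻¹ ^ p *
        ((1 - ‖w‖ ^ 2) ^ ((n : ℝ) * p) / (1 - ‖w‖ ^ ((n : ℝ) * p / 2 - p + 2)) ^ 2) *
          ‖iteratedDeriv (n + 1) F w‖ ^ p) := by
  have hderiv (i : ℕ) : ∀ w ∈ ball (0 : ℂ) 1, DifferentiableAt ℂ (iteratedDeriv i F) w := by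
    rw [iteratedDeriv_eq_iterate]
    exact fun w hw ↦ ((hF.analyticOnNhd isOpen_ball).iterated_deriv i w hw).differentiableAt
  rw [lintegral_norm_gt_one_eq, ← Measure.restrict_congr_set
    (sdiff_null_ae_eq_self (s := ball (0 : ℂ) 1) (measure_singleton 0))]
  refine setLIntegral_congr_fun (measurableSet_ball.diff (measurableSet_singleton 0)) ?_
  rintro w ⟨hw1, hw0 : w ≠ 0⟩
  have ht0 : 0 < ‖w‖ := norm_pos_iff.2 hw0
  have ht1 : ‖w‖ < 1 := mem_ball_zero_iff.1 hw1
  dsimp only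
  rw [← ENNReal.ofReal_mul (by positivity), norm_dbar_reflectedTaylor_zstar hw0
    (fun i _ ↦ hderiv i w hw1), norm_zstar, abs_of_nonneg (by nlinarith),
    inversion_weight_eq n ht0 ht1 (by positivity), Real.mul_rpow (by positivity) (by positivity)]
  ring_nf

theorem eqOn_iteratedDeriv_succ_of_hasDerivAt {𝕜 E : Type*} [NontriviallyNormedField 𝕜]
    [NormedAddCommGroup E] [NormedSpace 𝕜 E] {U : Set 𝕜} (hU : IsOpen U) {f F : 𝕜 → E}
    (hF : ∀ z ∈ U, HasDerivAt F (f z) z) (i : ℕ) :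
    EqOn (iteratedDeriv i f) (iteratedDeriv (i + 1) F) U := by
  rw [iteratedDeriv_succ']
  exact EqOn.iteratedDeriv_of_isOpen (fun z hz ↦ (hF z hz).deriv.symm) hU i

theorem ofReal_mul_lintegral_ofReal {X : Type*} [MeasurableSpace X] {μ : Measure X} {c : ℝ}
    (hc : 0 ≤ c) (g : X → ℝ) :
    ENNReal.ofReal c * ∫⁻ x, ENNReal.ofReal (g x) ∂μ = ∫⁻ x, ENNReal.ofReal (c * g x) ∂μ := by
  rw [← lintegral_const_mul' _ _ ENNReal.ofReal_ne_top]
  simp_rw [ENNReal.ofReal_mul hc]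

theorem exterior_interior_comparison_besov_general
    (p : ℝ) (hp : 1 ≤ p)
    (n : ℕ) (hn : 2 ≤ n)
    (f F : ℂ → ℂ)
    (hFprim : ∀ z ∈ ball (0 : ℂ) 1, HasDerivAt F (f z) z)
    (Ftil : ℂ → ℂ)
    (hFtil : ∀ z : ℂ, Ftil z =
      ∑ i ∈ Finset.range (n + 1),
        ((-1 : ℂ) ^ i / (Nat.factorial i : ℂ)) * (zstar z - z) ^ i *
          iteratedDeriv i F (zstar z)) :
    ∃ c₁ c₂ : ℝ, 0 < c₁ ∧ 0 < c₂ ∧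
      ENNReal.ofReal c₁ *
          (∫⁻ w in ball (0 : ℂ) 1,
            ENNReal.ofReal ((1 - ‖w‖) ^ ((n : ℝ) * p - 2) * ‖iteratedDeriv n f w‖ ^ p)) ≤
        (∫⁻ z in {z : ℂ | 1 < ‖z‖},
          ENNReal.ofReal (‖dbar Ftil z‖ ^ p /
            (‖z‖ ^ ((n : ℝ) * p / 2 - p + 2) - 1) ^ 2)) ∧
      (∫⁻ z in {z : ℂ | 1 < ‖z‖},
          ENNReal.ofReal (‖dbar Ftil z‖ ^ p /
            (‖z‖ ^ ((n : ℝ) * p / 2 - p + 2) - 1) ^ 2)) ≤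
        ENNReal.ofReal c₂ *
          (∫⁻ w in ball (0 : ℂ) 1,
            ENNReal.ofReal ((1 - ‖w‖) ^ ((n : ℝ) * p - 2) * ‖iteratedDeriv n f w‖ ^ p)) := by
  have hn' : (2 : ℝ) ≤ n := by exact_mod_cast hn
  have hα : 1 ≤ (n : ℝ) * p / 2 - p + 2 := by nlinarith
  have hN : 0 ≤ (n : ℝ) * p := by positivity
  have hF : DifferentiableOn ℂ F (ball 0 1) :=
    fun z hz ↦ (hFprim z hz).differentiableAt.differentiableWithinAt
  have hfF := eqOn_iteratedDeriv_succ_of_hasDerivAt isOpen_ball hFprim n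
  obtain rfl : Ftil = reflectedTaylor n F := funext hFtil
  rw [lintegral_dbar_reflectedTaylor_eq n p hF]
  refine ⟨(n ! : ℝ)⁻¹ ^ p * ((n : ℝ) * p / 2 - p + 2)⁻¹ ^ 2, (n ! : ℝ)⁻¹ ^ p * 2 ^ ((n : ℝ) * p),
    by positivity, by positivity, ?_, ?_⟩
  · rw [ofReal_mul_lintegral_ofReal (by positivity)]
    refine setLIntegral_mono' measurableSet_ball fun w hw ↦ ENNReal.ofReal_le_ofReal ?_
    rw [hfF hw]
    linear_combination ((n ! : ℝ)⁻¹ ^ p * ‖iteratedDeriv (n + 1) F w‖ ^ p) *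
      (inversion_weight_bounds (norm_nonneg w) (mem_ball_zero_iff.1 hw) hα hN).1
  · rw [ofReal_mul_lintegral_ofReal (by positivity)]
    refine setLIntegral_mono' measurableSet_ball fun w hw ↦ ENNReal.ofReal_le_ofReal ?_
    rw [hfF hw]
    linear_combination ((n ! : ℝ)⁻¹ ^ p * ‖iteratedDeriv (n + 1) F w‖ ^ p) *
      (inversion_weight_bounds (norm_nonneg w) (mem_ball_zero_iff.1 hw) hα hN).2

/-- The change-of-variables identity for the Besov case: the exterior
`∂̄`-integral of the explicit extension `F̃_n` is two-sidedly comparable to the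
interior weighted integral of `|f^{(n)}|^p`. -/
theorem exterior_interior_comparison_besov
    (p : ℝ) (hp : 1 ≤ p)
    (n : ℕ) (hn : 2 ≤ n)
    (f F : ℂ → ℂ)
    (hf : DifferentiableOn ℂ f (ball (0 : ℂ) 1))
    (hF0 : F 0 = 0)
    (hFprim : ∀ z ∈ ball (0 : ℂ) 1, HasDerivAt F (f z) z)
    (Ftil : ℂ → ℂ)
    (hFtil : ∀ z : ℂ, Ftil z =
      ∑ i ∈ Finset.range (n + 1),
        ((-1 : ℂ) ^ i / (Nat.factorial i : ℂ)) * (zstar z - z) ^ i *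
          iteratedDeriv i F (zstar z)) :
    ∃ c₁ c₂ : ℝ, 0 < c₁ ∧ 0 < c₂ ∧
      ENNReal.ofReal c₁ *
          (∫⁻ w in ball (0 : ℂ) 1,
            ENNReal.ofReal ((1 - ‖w‖) ^ ((n : ℝ) * p - 2) * ‖iteratedDeriv n f w‖ ^ p)) ≤
        (∫⁻ z in {z : ℂ | 1 < ‖z‖},
          ENNReal.ofReal (‖dbar Ftil z‖ ^ p /
            (‖z‖ ^ ((n : ℝ) * p / 2 - p + 2) - 1) ^ 2)) ∧
      (∫⁻ z in {z : ℂ | 1 < ‖z‖},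
          ENNReal.ofReal (‖dbar Ftil z‖ ^ p /
            (‖z‖ ^ ((n : ℝ) * p / 2 - p + 2) - 1) ^ 2)) ≤
        ENNReal.ofReal c₂ *
          (∫⁻ w in ball (0 : ℂ) 1,
            ENNReal.ofReal ((1 - ‖w‖) ^ ((n : ℝ) * p - 2) * ‖iteratedDeriv n f w‖ ^ p)) :=
  exterior_interior_comparison_besov_general p hp n hn f F hFprim Ftil hFtil
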